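/- Let G be a 2-edge-connected graph, H a 2-edge cover of G with a complex component C, and let G_C be the multigraph obtained from G by contracting each block of C and each other component of H to a single node. Let T_C be the tree in G_C induced by the bridges of C, and let P be a path in G_C avoiding the edges of T_C with two distinct endpoints u, v in T_C and all internal vertices outside T_C (a bridge-covering path). Then H' = H ∪ P is a 2-edge cover of G with strictly fewer bridges than H; specifically, every bridge of H on the u–v path in T_C is not a bridge of H', and every bridge of H' is a bridge of H. -/

import Mathlib

variable {V : Type*}

/-- Reachability between vertices using only edges from the edge set `F`. -/
def ReachE (F : Set (Sym2 V)) (a b : V) : Prop :=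
  Relation.ReflTransGen (fun x y => s(x, y) ∈ F) a b

/-- The set of vertices incident to at least one edge of `F`. -/
def eSupport (F : Set (Sym2 V)) : Set V :=
  {v | ∃ e ∈ F, v ∈ e}

/-- The edge set `F` is connected (as a graph on its support). -/
def ConnSet (F : Set (Sym2 V)) : Prop :=
  ∀ a ∈ eSupport F, ∀ b ∈ eSupport F, ReachE F a b

/-- `C` is (the edge set of) a connected component of the edge set `F`. -/
def IsComponent (F C : Set (Sym2 V)) : Prop :=
  C.Nonempty ∧ C ⊆ F ∧ ConnSet C ∧
    ∀ e ∈ F, e ∉ C → ∀ v ∈ e, v ∉ eSupport C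

/-- `e` is a bridge of the edge set `F`: removing it disconnects its endpoints. -/
def IsBridge (F : Set (Sym2 V)) (e : Sym2 V) : Prop :=
  e ∈ F ∧ ∃ a b : V, e = s(a, b) ∧ ¬ ReachE (F \ {e}) a b

/-- `H` is a 2-edge-connected spanning subgraph. -/
def TwoECSS (H : Set (Sym2 V)) : Prop :=
  (∀ a b : V, ReachE H a b) ∧ ∀ e ∈ H, ∀ a b : V, ReachE (H \ {e}) a b

/-!
Each new edge lies on a cycle: go around the rest of the path and close it up through the
connected component `C`. Hence `H ∪ P` has no bridge that `H` lacks. A bridge `e` of `C`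
separating the endpoints of the path leaves each endpoint on the side of a different end of `e`,
and the path joins these two sides without using `e`, so `e` is no longer a bridge.
-/

namespace ReachE

variable {F F' : Set (Sym2 V)} {a b x y z : V}

theorem mono (h : F ⊆ F') (hr : ReachE F x y) : ReachE F' x y :=
  Relation.ReflTransGen.mono (fun _ _ hxy => h hxy) _ _ hr

theorem symm (hr : ReachE F x y) : ReachE F y x := by
  induction hr with
  | refl => exact .refl
  | tail _ hzy ih => exact Relation.ReflTransGen.head (by rwa [Sym2.eq_swap]) ih

theorem trans (h₁ : ReachE F x y) (h₂ : ReachE F y z) : ReachE F x z :=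
  Relation.ReflTransGen.trans h₁ h₂

theorem single (h : s(x, y) ∈ F) : ReachE F x y :=
  Relation.ReflTransGen.single h

theorem diff_singleton_or (a b : V) (h : ReachE F x y) :
    ReachE (F \ {s(a, b)}) x y ∨ ReachE (F \ {s(a, b)}) x a ∨ ReachE (F \ {s(a, b)}) x b := by
  induction h with
  | refl => exact Or.inl .refl
  | @tail c d _ hcd ih =>
    rcases ih with ih | ih
    · by_cases he : s(c, d) = s(a, b)
      · rcases Sym2.eq_iff.mp he with ⟨rfl, rfl⟩ | ⟨rfl, rfl⟩
        · exact Or.inr (Or.inl ih)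
        · exact Or.inr (Or.inr ih)
      · exact Or.inl (Relation.ReflTransGen.tail ih ⟨hcd, he⟩)
    · exact Or.inr ih

theorem diff_singleton (hab : ReachE (F \ {s(a, b)}) a b) (h : ReachE F x y) :
    ReachE (F \ {s(a, b)}) x y := by
  induction h with
  | refl => exact .refl
  | @tail c d _ hcd ih =>
    by_cases he : s(c, d) = s(a, b)
    · rcases Sym2.eq_iff.mp he with ⟨rfl, rfl⟩ | ⟨rfl, rfl⟩
      · exact ih.trans hab
      · exact ih.trans hab.symm
    · exact Relation.ReflTransGen.tail ih ⟨hcd, he⟩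

/-- Each side of an edge separating `x` from `y` contains one of its ends, so reconnecting `x`
and `y` reconnects the ends. -/
theorem ends_of_separates (hxy : ReachE F x y) (hsep : ¬ ReachE (F \ {s(a, b)}) x y)
    (hF : F \ {s(a, b)} ⊆ F') (hxy' : ReachE F' x y) : ReachE F' a b := by
  rcases hxy.diff_singleton_or a b with h | hxa | hxb
  · exact absurd h hsep
  all_goals rcases hxy.symm.diff_singleton_or a b with h | hya | hyb
  all_goals first
    | exact absurd h.symm hsep
    | exact absurd (hxa.trans hya.symm) hsep
    | exact absurd (hxb.trans hyb.symm) hsep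
    | exact ((hxa.mono hF).symm.trans hxy').trans (hyb.mono hF)
    | exact ((hya.mono hF).symm.trans hxy'.symm).trans (hxb.mono hF)

end ReachE

theorem IsBridge.not_reachE {F : Set (Sym2 V)} {a b : V} (h : IsBridge F s(a, b)) :
    ¬ ReachE (F \ {s(a, b)}) a b := by
  obtain ⟨-, c, d, hcd, hnr⟩ := h
  intro hr
  rcases Sym2.eq_iff.mp hcd with ⟨rfl, rfl⟩ | ⟨rfl, rfl⟩
  · exact hnr hr
  · exact hnr hr.symm

theorem IsBridge.of_subset {F F' : Set (Sym2 V)} {e : Sym2 V} (h : IsBridge F' e)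
    (hF : F ⊆ F') (he : e ∈ F) : IsBridge F e := by
  obtain ⟨-, a, b, rfl, hnr⟩ := h
  exact ⟨he, a, b, rfl, fun hr => hnr (hr.mono (Set.sdiff_subset_sdiff_left hF))⟩

theorem ConnSet.mem_of_separates {C : Set (Sym2 V)} (hC : ConnSet C) {e : Sym2 V} {x y : V}
    (hx : x ∈ eSupport C) (hy : y ∈ eSupport C) (hsep : ¬ ReachE (C \ {e}) x y) : e ∈ C := by
  by_contra he
  exact hsep (by rw [Set.sdiff_singleton_eq_self he]; exact hC x hx y hy)

namespace IsComponent

variable {H C : Set (Sym2 V)}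

theorem reachE_diff_singleton (hC : IsComponent H C) {e : Sym2 V} {a b : V}
    (ha : a ∈ eSupport C) (h : ReachE (H \ {e}) a b) : ReachE (C \ {e}) a b := by
  suffices ReachE (C \ {e}) a b ∧ b ∈ eSupport C from this.1
  induction h with
  | refl => exact ⟨.refl, ha⟩
  | @tail c d _ hcd ih =>
    obtain ⟨hac, hc⟩ := ih
    have hcdC : s(c, d) ∈ C := by
      by_contra hnot
      exact hC.2.2.2 _ hcd.1 hnot c (Sym2.mem_mk_left c d) hc
    exact ⟨Relation.ReflTransGen.tail hac ⟨hcdC, hcd.2⟩, s(c, d), hcdC, Sym2.mem_mk_right c d⟩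

theorem isBridge_of_separates (hC : IsComponent H C) {e : Sym2 V} {x y : V}
    (hx : x ∈ eSupport C) (hy : y ∈ eSupport C) (hsep : ¬ ReachE (C \ {e}) x y) :
    IsBridge H e := by
  have heC := hC.2.2.1.mem_of_separates hx hy hsep
  induction e using Sym2.ind with
  | _ a b =>
    refine ⟨hC.2.1 heC, a, b, rfl, fun hab => hsep ?_⟩
    have ha : a ∈ eSupport C := ⟨_, heC, Sym2.mem_mk_left a b⟩
    exact (hC.reachE_diff_singleton ha hab).diff_singleton (hC.2.2.1 x hx y hy)

end IsComponent

def walkEdges (n : ℕ) (g : ℕ → Sym2 V) : Set (Sym2 V) :=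
  {e | ∃ j < n, g j = e}

/-- The walk `xout 0 —g 0— xin 1 ⋯ xout 1 —g 1— xin 2 ⋯ xin n` from `C` back to `C`, whose
segments from `xin j` to `xout j` run inside `H \ C`. -/
structure IsReturnWalk (H C : Set (Sym2 V)) (n : ℕ) (xin xout : ℕ → V) (g : ℕ → Sym2 V) :
    Prop where
  start_mem : xout 0 ∈ eSupport C
  end_eq : xin n = xout n
  end_mem : xin n ∈ eSupport C
  reachE_stop : ∀ j, 0 < j → j < n → ReachE (H \ C) (xin j) (xout j)
  edge_eq : ∀ j < n, g j = s(xout j, xin (j + 1))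
  edge_not_mem : ∀ j < n, g j ∉ H
  edge_inj : ∀ j < n, ∀ j' < n, g j = g j' → j = j'

namespace IsReturnWalk

variable {H C S : Set (Sym2 V)} {n : ℕ} {xin xout : ℕ → V} {g : ℕ → Sym2 V}

theorem reachE_in_out (hw : IsReturnWalk H C n xin xout g) (hS : H \ C ⊆ S) {j : ℕ}
    (hj₀ : 0 < j) (hjn : j ≤ n) : ReachE S (xin j) (xout j) := by
  rcases hjn.lt_or_eq with hjn | rfl
  · exact (hw.reachE_stop j hj₀ hjn).mono hS
  · rw [hw.end_eq]
    exact .refl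

theorem reachE_out (hw : IsReturnWalk H C n xin xout g) (hS : H \ C ⊆ S) {i k : ℕ}
    (hik : i ≤ k) (hkn : k ≤ n) (hg : ∀ m, i ≤ m → m < k → g m ∈ S) :
    ReachE S (xout i) (xout k) := by
  induction k, hik using Nat.le_induction with
  | base => exact .refl
  | succ k hik ih =>
    have hedge : s(xout k, xin (k + 1)) ∈ S := hw.edge_eq k hkn ▸ hg k hik k.lt_succ_self
    exact ((ih (Nat.le_of_lt hkn) fun m him hmk => hg m him (hmk.trans k.lt_succ_self)).trans
      (.single hedge)).trans (hw.reachE_in_out hS k.succ_pos hkn)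

theorem reachE_diff_of_mem (hw : IsReturnWalk H C n xin xout g) (hCH : C ⊆ H) {e : Sym2 V}
    (he : e ∈ C) : ReachE ((H ∪ walkEdges n g) \ {e}) (xout 0) (xin n) := by
  have hHC : H \ C ⊆ (H ∪ walkEdges n g) \ {e} := fun f hf =>
    ⟨.inl hf.1, fun hfe => hf.2 (Set.mem_singleton_iff.mp hfe ▸ he)⟩
  have hg : ∀ m < n, g m ∈ (H ∪ walkEdges n g) \ {e} := fun m hm =>
    ⟨.inr ⟨m, hm, rfl⟩, fun hme =>
      hw.edge_not_mem m hm (Set.mem_singleton_iff.mp hme ▸ hCH he)⟩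
  rw [hw.end_eq]
  exact hw.reachE_out hHC n.zero_le le_rfl fun m _ hm => hg m hm

theorem not_isBridge_union (hw : IsReturnWalk H C n xin xout g) (hCH : C ⊆ H)
    (hC : ConnSet C) {e : Sym2 V} (hsep : ¬ ReachE (C \ {e}) (xout 0) (xin n)) :
    ¬ IsBridge (H ∪ walkEdges n g) e := by
  have heC := hC.mem_of_separates hw.start_mem hw.end_mem hsep
  rintro ⟨-, a, b, rfl, hab⟩
  have hCF : C \ {s(a, b)} ⊆ (H ∪ walkEdges n g) \ {s(a, b)} :=
    Set.sdiff_subset_sdiff_left (hCH.trans Set.subset_union_left)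
  exact hab ((hC _ hw.start_mem _ hw.end_mem).ends_of_separates hsep hCF
    (hw.reachE_diff_of_mem hCH heC))

/-- The new edge `g j` lies on the cycle formed by the rest of the walk and a path in `C`. -/
theorem reachE_diff_edge (hw : IsReturnWalk H C n xin xout g) (hCH : C ⊆ H) (hC : ConnSet C)
    {j : ℕ} (hj : j < n) : ReachE ((H ∪ walkEdges n g) \ {g j}) (xout j) (xin (j + 1)) := by
  set S := (H ∪ walkEdges n g) \ {g j}
  have hHS : H ⊆ S := fun f hf =>
    ⟨.inl hf, fun hfj => hw.edge_not_mem j hj (Set.mem_singleton_iff.mp hfj ▸ hf)⟩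
  have hgS : ∀ m < n, m ≠ j → g m ∈ S := fun m hm hmj =>
    ⟨.inr ⟨m, hm, rfl⟩, fun hmj' => hmj (hw.edge_inj m hm j hj hmj')⟩
  have hHCS : H \ C ⊆ S := Set.sdiff_subset.trans hHS
  have hbefore : ReachE S (xout 0) (xout j) :=
    hw.reachE_out hHCS j.zero_le hj.le fun m _ hmj => hgS m (hmj.trans hj) hmj.ne
  have hafter : ReachE S (xout (j + 1)) (xout n) :=
    hw.reachE_out hHCS hj le_rfl fun m hjm hmn => hgS m hmn (Nat.ne_of_gt hjm)
  have hacross : ReachE S (xout 0) (xout n) :=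
    hw.end_eq ▸ (hC _ hw.start_mem _ hw.end_mem).mono (hCH.trans hHS)
  exact ((hbefore.symm.trans hacross).trans hafter.symm).trans
    (hw.reachE_in_out hHCS j.succ_pos hj).symm

theorem isBridge_of_isBridge_union (hw : IsReturnWalk H C n xin xout g) (hCH : C ⊆ H)
    (hC : ConnSet C) {e : Sym2 V} (he : IsBridge (H ∪ walkEdges n g) e) : IsBridge H e := by
  rcases he.1 with heH | ⟨j, hj, rfl⟩
  · exact he.of_subset Set.subset_union_left heH
  · rw [hw.edge_eq j hj] at he
    exact absurd (hw.edge_eq j hj ▸ hw.reachE_diff_edge hCH hC hj) he.not_reachE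

end IsReturnWalk

theorem bridge_covering_path_general [Fintype V] (G : SimpleGraph V)
    (H : Set (Sym2 V))
    (hcover : ∀ v : V, 2 ≤ {e ∈ H | v ∈ e}.ncard)
    (C : Set (Sym2 V)) (hC : IsComponent H C)
    (n : ℕ)
    (xin xout : ℕ → V) (g : ℕ → Sym2 V)
    (hstart : xin 0 = xout 0 ∧ xout 0 ∈ eSupport C)
    (hend : xin n = xout n ∧ xin n ∈ eSupport C)
    (hmid : ∀ j : ℕ, 0 < j → j < n →
      xin j ∉ eSupport C ∧ xout j ∉ eSupport C ∧ ReachE (H \ C) (xin j) (xout j))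
    (hg : ∀ j : ℕ, j < n →
      g j = s(xout j, xin (j + 1)) ∧ g j ∈ G.edgeSet ∧ g j ∉ H)
    (hginj : ∀ j : ℕ, j < n → ∀ j' : ℕ, j' < n → g j = g j' → j = j')
    (hdistinct : ∃ e₀ ∈ C, ¬ ReachE (C \ {e₀}) (xout 0) (xin n)) :
    ∀ P : Set (Sym2 V), P = {e | ∃ j : ℕ, j < n ∧ g j = e} →
      (∀ v : V, 2 ≤ {e ∈ H ∪ P | v ∈ e}.ncard) ∧
      (∀ e : Sym2 V, IsBridge H e → ¬ ReachE (C \ {e}) (xout 0) (xin n) →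
        ¬ IsBridge (H ∪ P) e) ∧
      (∀ e : Sym2 V, IsBridge (H ∪ P) e → IsBridge H e) ∧
      {e : Sym2 V | IsBridge (H ∪ P) e}.ncard < {e : Sym2 V | IsBridge H e}.ncard := by
  rintro P rfl
  have hw : IsReturnWalk H C n xin xout g :=
    ⟨hstart.2, hend.1, hend.2, fun j hj₀ hjn => (hmid j hj₀ hjn).2.2, fun j hj => (hg j hj).1,
      fun j hj => (hg j hj).2.2, hginj⟩
  have hCH := hC.2.1
  have hconn := hC.2.2.1
  have hsub : {e | IsBridge (H ∪ walkEdges n g) e} ⊆ {e | IsBridge H e} :=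
    fun e => hw.isBridge_of_isBridge_union hCH hconn
  obtain ⟨e₀, -, hsep⟩ := hdistinct
  refine ⟨fun v => (hcover v).trans (Set.ncard_le_ncard ?_ (Set.toFinite _)),
    fun e _ => hw.not_isBridge_union hCH hconn, hsub, Set.ncard_lt_ncard ?_ (Set.toFinite _)⟩
  · exact fun f hf => ⟨.inl hf.1, hf.2⟩
  · exact (Set.ssubset_iff_of_subset hsub).2
      ⟨e₀, hC.isBridge_of_separates hw.start_mem hw.end_mem hsep,
        hw.not_isBridge_union hCH hconn hsep⟩

/-- Bridge covering.  Let `G` be a 2-edge-connected graph, `H` a 2-edge cover of `G`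
with a complex component `C`, and let `P` be a bridge-covering path for `C`: a path in
the contracted multigraph `G_C` (obtained by contracting each block of `C` and each
other component of `H`) avoiding the edges of the bridge tree `T_C`, with two distinct
endpoints in `T_C` and all internal vertices outside `T_C`.  Concretely, `P` consists
of the edges `g 0, ..., g (n-1)` of `G \ H`, where `g j = s(xout j, xin (j+1))`,
the path starts at `xin 0 = xout 0 ∈ V(C)`, ends at `xin n = xout n ∈ V(C)`, and each
intermediate stop enters at `xin j` and leaves at `xout j`, both lying outside `C` and
in a common component of `H` other than `C`; the two endpoints lie in distinct nodes
of `T_C`, i.e. some bridge of `C` separates them.  Then `H' = H ∪ P` is a 2-edge cover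
of `G` with strictly fewer bridges than `H`; specifically, every bridge of `H` on the
path in `T_C` between the two endpoints (i.e. separating them in `C`) is not a bridge
of `H'`, and every bridge of `H'` is a bridge of `H`. -/
theorem bridge_covering_path [Fintype V] (G : SimpleGraph V)
    (hG : TwoECSS (G.edgeSet : Set (Sym2 V)))
    (H : Set (Sym2 V)) (hHG : H ⊆ G.edgeSet)
    (hcover : ∀ v : V, 2 ≤ {e ∈ H | v ∈ e}.ncard)
    (C : Set (Sym2 V)) (hC : IsComponent H C)
    (hcomplex : ∃ e : Sym2 V, IsBridge C e)
    (n : ℕ) (hn : 1 ≤ n)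
    (xin xout : ℕ → V) (g : ℕ → Sym2 V)
    (hstart : xin 0 = xout 0 ∧ xout 0 ∈ eSupport C)
    (hend : xin n = xout n ∧ xin n ∈ eSupport C)
    (hmid : ∀ j : ℕ, 0 < j → j < n →
      xin j ∉ eSupport C ∧ xout j ∉ eSupport C ∧ ReachE (H \ C) (xin j) (xout j))
    (hg : ∀ j : ℕ, j < n →
      g j = s(xout j, xin (j + 1)) ∧ g j ∈ G.edgeSet ∧ g j ∉ H)
    (hginj : ∀ j : ℕ, j < n → ∀ j' : ℕ, j' < n → g j = g j' → j = j')
    (hdistinct : ∃ e₀ ∈ C, ¬ ReachE (C \ {e₀}) (xout 0) (xin n)) :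
    ∀ P : Set (Sym2 V), P = {e | ∃ j : ℕ, j < n ∧ g j = e} →
      (∀ v : V, 2 ≤ {e ∈ H ∪ P | v ∈ e}.ncard) ∧
      (∀ e : Sym2 V, IsBridge H e → ¬ ReachE (C \ {e}) (xout 0) (xin n) →
        ¬ IsBridge (H ∪ P) e) ∧
      (∀ e : Sym2 V, IsBridge (H ∪ P) e → IsBridge H e) ∧
      {e : Sym2 V | IsBridge (H ∪ P) e}.ncard < {e : Sym2 V | IsBridge H e}.ncard :=
  bridge_covering_path_general G H hcover C hC n xin xout g hstart hend hmid hg hginj hdistinct
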